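/- arXiv:2307.04676 — 3 statements merged into one kernel-verified Lean document; each statement's English description precedes it below -/
import Mathlib

section
/- Let L be a real-valued integrable random variable and β ∈ (0,1). Then the Value at Risk v_β = inf{u ∈ ℝ : P(L ≥ u) ≤ β} is a global minimizer of the function φ(u) = u + (1/β) E[(L − u)^+]; that is, for every u ∈ ℝ, u + (1/β) E[(L − u)^+] ≥ v_β + (1/β) E[(L − v_β)^+]. -/
open MeasureTheory

/-- **Value at Risk minimizes the Rockafellar–Uryasev objective.**
For an integrable real random variable `L` and `β ∈ (0,1)`, the Value at Risk
`v_β = inf {u : P(L ≥ u) ≤ β}` is a global minimizer of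
`φ(u) = u + β⁻¹ E[(L - u)⁺]`. -/
theorem var_minimizes_rockafellar_uryasev
    {Ω : Type*} [MeasurableSpace Ω] (μ : Measure Ω) [IsProbabilityMeasure μ]
    (L : Ω → ℝ) (hLm : Measurable L) (hL : Integrable L μ)
    (β : ℝ) (hβ : β ∈ Set.Ioo (0 : ℝ) 1)
    (v : ℝ) (hv : v = sInf {u : ℝ | (μ {ω | u ≤ L ω}).toReal ≤ β}) :
    ∀ u : ℝ,
      u + β⁻¹ * ∫ ω, max (L ω - u) 0 ∂μ
        ≥ v + β⁻¹ * ∫ ω, max (L ω - v) 0 ∂μ := by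
  obtain ⟨hβ0, hβ1⟩ := hβ
  set S : Set ℝ := {u : ℝ | (μ {ω | u ≤ L ω}).toReal ≤ β} with hSdef
  have hmeas : ∀ u : ℝ, MeasurableSet {ω | u ≤ L ω} := fun u => hLm measurableSet_Ici
  -- S is nonempty
  have hne : S.Nonempty := by
    have hanti : Antitone (fun n : ℕ => {ω | (n : ℝ) ≤ L ω}) := by
      intro m n hmn ω hω
      simp only [Set.mem_setOf_eq] at *
      exact le_trans (by exact_mod_cast hmn) hω
    have hiInter : (⋂ n : ℕ, {ω | (n : ℝ) ≤ L ω}) = ∅ := by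
      ext ω
      simp only [Set.mem_iInter, Set.mem_setOf_eq, Set.mem_empty_iff_false, iff_false, not_forall,
        not_le]
      obtain ⟨n, hn⟩ := exists_nat_gt (L ω)
      exact ⟨n, hn⟩
    have htend := tendsto_measure_iInter_atTop (μ := μ)
      (fun n => (hmeas _).nullMeasurableSet) hanti ⟨0, measure_ne_top μ _⟩
    rw [hiInter, measure_empty] at htend
    have hev : ∀ᶠ n : ℕ in Filter.atTop, μ {ω | (n : ℝ) ≤ L ω} < ENNReal.ofReal β := by
      refine htend.eventually_lt_const ?_
      simp [ENNReal.ofReal_pos, hβ0]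
    obtain ⟨n, hn⟩ := hev.exists
    exact ⟨(n : ℝ), ENNReal.toReal_le_of_le_ofReal hβ0.le hn.le⟩
  -- S is bounded below
  have hbdd : BddBelow S := by
    have hmono : Monotone (fun n : ℕ => {ω | -(n : ℝ) ≤ L ω}) := by
      intro m n hmn ω hω
      simp only [Set.mem_setOf_eq] at *
      have : -(n : ℝ) ≤ -(m : ℝ) := by exact_mod_cast neg_le_neg (by exact_mod_cast hmn)
      linarith
    have hiUnion : (⋃ n : ℕ, {ω | -(n : ℝ) ≤ L ω}) = Set.univ := by
      ext ω
      simp only [Set.mem_iUnion, Set.mem_setOf_eq, Set.mem_univ, iff_true]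
      obtain ⟨n, hn⟩ := exists_nat_gt (-(L ω))
      exact ⟨n, by linarith⟩
    have htend := tendsto_measure_iUnion_atTop (μ := μ) hmono
    rw [hiUnion, measure_univ] at htend
    have hev : ∀ᶠ n : ℕ in Filter.atTop, ENNReal.ofReal β < μ {ω | -(n : ℝ) ≤ L ω} := by
      refine htend.eventually_const_lt ?_
      exact ENNReal.ofReal_lt_one.mpr hβ1
    obtain ⟨n, hn⟩ := hev.exists
    refine ⟨-(n : ℝ), fun s hs => ?_⟩
    by_contra hlt
    push_neg at hlt
    have hsub : {ω | -(n : ℝ) ≤ L ω} ⊆ {ω | s ≤ L ω} := fun ω hω => le_trans hlt.le hω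
    have h1 : μ {ω | -(n : ℝ) ≤ L ω} ≤ μ {ω | s ≤ L ω} := measure_mono hsub
    have h2 : μ {ω | s ≤ L ω} ≤ ENNReal.ofReal β :=
      (ENNReal.le_ofReal_iff_toReal_le (measure_ne_top μ _) hβ0.le).mpr hs
    exact absurd (le_trans h1 h2) (not_le.mpr hn)
  -- β ≤ P(L ≥ v)
  have hge : β ≤ (μ {ω | v ≤ L ω}).toReal := by
    have hanti : Antitone (fun n : ℕ => {ω | v - 1 / (n + 1 : ℝ) ≤ L ω}) := by
      intro m n hmn ω hω
      simp only [Set.mem_setOf_eq] at *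
      have h1 : 1 / (n + 1 : ℝ) ≤ 1 / (m + 1 : ℝ) := by
        apply one_div_le_one_div_of_le <;> [positivity; exact_mod_cast by linarith]
      linarith
    have hiInter : (⋂ n : ℕ, {ω | v - 1 / (n + 1 : ℝ) ≤ L ω}) = {ω | v ≤ L ω} := by
      ext ω
      simp only [Set.mem_iInter, Set.mem_setOf_eq]
      constructor
      · intro h
        by_contra hlt
        push_neg at hlt
        obtain ⟨n, hn⟩ := exists_nat_one_div_lt (sub_pos.mpr hlt)
        have := h n
        linarith
      · intro h n
        have : (0 : ℝ) < 1 / (n + 1 : ℝ) := by positivity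
        linarith
    have htend := tendsto_measure_iInter_atTop (μ := μ)
      (fun n => (hmeas _).nullMeasurableSet) hanti ⟨0, measure_ne_top μ _⟩
    rw [hiInter] at htend
    have hterm : ∀ n : ℕ, ENNReal.ofReal β ≤ μ {ω | v - 1 / (n + 1 : ℝ) ≤ L ω} := by
      intro n
      have hnot : v - 1 / (n + 1 : ℝ) ∉ S := by
        intro hmem
        have := csInf_le hbdd hmem
        rw [← hv] at this
        have hpos : (0 : ℝ) < 1 / (n + 1 : ℝ) := by positivity
        linarith
      simp only [hSdef, Set.mem_setOf_eq, not_le] at hnot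
      exact (ENNReal.ofReal_le_iff_le_toReal (measure_ne_top μ _)).mpr hnot.le
    have hlim : ENNReal.ofReal β ≤ μ {ω | v ≤ L ω} :=
      ge_of_tendsto' htend hterm
    exact (ENNReal.ofReal_le_iff_le_toReal (measure_ne_top μ _)).mp hlim
  -- P(L > v) ≤ β
  have hle : (μ {ω | v < L ω}).toReal ≤ β := by
    have hmono : Monotone (fun n : ℕ => {ω | v + 1 / (n + 1 : ℝ) ≤ L ω}) := by
      intro m n hmn ω hω
      simp only [Set.mem_setOf_eq] at *
      have h1 : 1 / (n + 1 : ℝ) ≤ 1 / (m + 1 : ℝ) := by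
        apply one_div_le_one_div_of_le <;> [positivity; exact_mod_cast by linarith]
      linarith
    have hiUnion : (⋃ n : ℕ, {ω | v + 1 / (n + 1 : ℝ) ≤ L ω}) = {ω | v < L ω} := by
      ext ω
      simp only [Set.mem_iUnion, Set.mem_setOf_eq]
      constructor
      · rintro ⟨n, hn⟩
        have : (0 : ℝ) < 1 / (n + 1 : ℝ) := by positivity
        linarith
      · intro h
        obtain ⟨n, hn⟩ := exists_nat_one_div_lt (sub_pos.mpr h)
        exact ⟨n, by linarith⟩
    have htend := tendsto_measure_iUnion_atTop (μ := μ) hmono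
    rw [hiUnion] at htend
    have hterm : ∀ n : ℕ, μ {ω | v + 1 / (n + 1 : ℝ) ≤ L ω} ≤ ENNReal.ofReal β := by
      intro n
      have hlt : sInf S < v + 1 / (n + 1 : ℝ) := by
        rw [← hv]
        have : (0 : ℝ) < 1 / (n + 1 : ℝ) := by positivity
        linarith
      obtain ⟨s, hsS, hslt⟩ := exists_lt_of_csInf_lt hne hlt
      have hsub : {ω | v + 1 / (n + 1 : ℝ) ≤ L ω} ⊆ {ω | s ≤ L ω} :=
        fun ω hω => le_trans hslt.le hω
      refine le_trans (measure_mono hsub) ?_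
      exact (ENNReal.le_ofReal_iff_toReal_le (measure_ne_top μ _) hβ0.le).mpr hsS
    have hlim : μ {ω | v < L ω} ≤ ENNReal.ofReal β :=
      le_of_tendsto' htend hterm
    exact ENNReal.toReal_le_of_le_ofReal hβ0.le hlim
  -- integrability of the positive parts
  have hint : ∀ t : ℝ, Integrable (fun ω => max (L ω - t) 0) μ :=
    fun t => (hL.sub (integrable_const t)).pos_part
  intro u
  rcases le_or_gt v u with h | h
  · -- case v ≤ u
    have hpt : ∀ ω, max (L ω - v) 0 - max (L ω - u) 0
        ≤ Set.indicator {ω | v < L ω} (fun _ => u - v) ω := by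
      intro ω
      by_cases hω : v < L ω
      · simp only [Set.indicator_apply, Set.mem_setOf_eq, hω, if_true]
        have h1 : max (L ω - v) 0 = L ω - v := max_eq_left (by linarith)
        have h2 : L ω - u ≤ max (L ω - u) 0 := le_max_left _ _
        linarith
      · simp only [Set.indicator_apply, Set.mem_setOf_eq, hω, if_false]
        push_neg at hω
        have h1 : max (L ω - v) 0 = 0 := max_eq_right (by linarith)
        have h2 : (0 : ℝ) ≤ max (L ω - u) 0 := le_max_right _ _
        linarith
    have hind : Integrable (Set.indicator {ω | v < L ω} fun _ => u - v) μ :=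
      (integrable_const (u - v)).indicator (hLm measurableSet_Ioi)
    have hmono := integral_mono ((hint v).sub (hint u)) hind hpt
    simp only [Pi.sub_apply] at hmono
    rw [integral_sub (hint v) (hint u), integral_indicator_const (u - v)
      (show MeasurableSet {ω | v < L ω} from hLm measurableSet_Ioi)] at hmono
    simp only [smul_eq_mul] at hmono
    have hb : (μ {ω | v < L ω}).toReal * (u - v) ≤ β * (u - v) :=
      mul_le_mul_of_nonneg_right hle (by linarith)
    have key : β⁻¹ * ((∫ ω, max (L ω - v) 0 ∂μ) - ∫ ω, max (L ω - u) 0 ∂μ) ≤ u - v := by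
      have h2 : β⁻¹ * ((∫ ω, max (L ω - v) 0 ∂μ) - ∫ ω, max (L ω - u) 0 ∂μ)
          ≤ β⁻¹ * (β * (u - v)) :=
        mul_le_mul_of_nonneg_left (le_trans hmono hb) (by positivity)
      rwa [← mul_assoc, inv_mul_cancel₀ (ne_of_gt hβ0), one_mul] at h2
    rw [mul_sub] at key
    linarith
  · -- case u < v
    have hpt : ∀ ω, Set.indicator {ω | v ≤ L ω} (fun _ => v - u) ω
        ≤ max (L ω - u) 0 - max (L ω - v) 0 := by
      intro ω
      by_cases hω : v ≤ L ω
      · simp only [Set.indicator_apply, Set.mem_setOf_eq, hω, if_true]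
        have h1 : max (L ω - v) 0 = L ω - v := max_eq_left (by linarith)
        have h2 : max (L ω - u) 0 = L ω - u := max_eq_left (by linarith)
        rw [h1, h2]; ring_nf; linarith
      · simp only [Set.indicator_apply, Set.mem_setOf_eq, hω, if_false]
        push_neg at hω
        have h1 : max (L ω - v) 0 = 0 := max_eq_right (by linarith)
        have h2 : (0 : ℝ) ≤ max (L ω - u) 0 := le_max_right _ _
        linarith
    have hind : Integrable (Set.indicator {ω | v ≤ L ω} fun _ => v - u) μ :=
      (integrable_const (v - u)).indicator (hmeas v)
    have hmono := integral_mono hind ((hint u).sub (hint v)) hpt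
    simp only [Pi.sub_apply] at hmono
    rw [integral_sub (hint u) (hint v), integral_indicator_const (v - u) (hmeas v)] at hmono
    simp only [smul_eq_mul] at hmono
    have hb : β * (v - u) ≤ (μ {ω | v ≤ L ω}).toReal * (v - u) :=
      mul_le_mul_of_nonneg_right hge (by linarith)
    have key : v - u ≤ β⁻¹ * ((∫ ω, max (L ω - u) 0 ∂μ) - ∫ ω, max (L ω - v) 0 ∂μ) := by
      have h2 : β⁻¹ * (β * (v - u))
          ≤ β⁻¹ * ((∫ ω, max (L ω - u) 0 ∂μ) - ∫ ω, max (L ω - v) 0 ∂μ) :=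
        mul_le_mul_of_nonneg_left (le_trans hb hmono) (by positivity)
      rwa [← mul_assoc, inv_mul_cancel₀ (ne_of_gt hβ0), one_mul] at h2
    rw [mul_sub] at key
    linarith
end

section
/- Let L be a real-valued integrable random variable and β ∈ (0,1), and let v_β = inf{u ∈ ℝ : P(L ≥ u) ≤ β}. If P(L ≥ v_β) = β, then v_β + (1/β) E[(L − v_β)^+] = E[L | L ≥ v_β]; consequently the Conditional Value at Risk admits the variational representation C_β = E[L | L ≥ v_β] = inf_{u ∈ ℝ} { u + (1/β) E[(L − u)^+] }. -/
/-!
Write `S = {v ≤ L}`. For every set `s` and every `u`, `∫ₛ L - u μ(s) = ∫ₛ (L - u) ≤ E[(L - u)⁺]`,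
so dividing by `μ(s) = β` gives `E[L ∣ s] ≤ u + β⁻¹ E[(L - u)⁺]`. For `s = S` and `u = v` this is an
equality, since `(L - v)⁺` vanishes off `S` and equals `L - v` on it. Hence `v` minimizes
`u ↦ u + β⁻¹ E[(L - u)⁺]` and the minimum is `E[L ∣ S]`.
-/

open MeasureTheory

namespace MeasureTheory

variable {Ω : Type*} [MeasurableSpace Ω] {μ : Measure Ω} [IsFiniteMeasure μ] {L : Ω → ℝ}

/-- The Rockafellar–Uryasev function. -/
noncomputable def cvarObjective (μ : Measure Ω) (L : Ω → ℝ) (β u : ℝ) : ℝ :=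
  u + β⁻¹ * ∫ ω, max (L ω - u) 0 ∂μ

theorem integral_max_sub_zero_eq (hL : Integrable L μ) (v : ℝ) :
    ∫ ω, max (L ω - v) 0 ∂μ = ∫ ω in {ω | v ≤ L ω}, L ω ∂μ - v * μ.real {ω | v ≤ L ω} := by
  have hS : NullMeasurableSet {ω | v ≤ L ω} μ :=
    nullMeasurableSet_le aemeasurable_const hL.aemeasurable
  have hpos : (fun ω => max (L ω - v) 0) = {ω | v ≤ L ω}.indicator (fun ω => L ω - v) := by
    funext ω
    by_cases h : v ≤ L ω
    · simp [h]
    · simp [h, (not_le.mp h).le]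
  rw [hpos, integral_indicator₀ hS, integral_sub hL.integrableOn (integrable_const v).integrableOn,
    setIntegral_const, smul_eq_mul, mul_comm]

theorem setIntegral_sub_le_integral_max_sub_zero (hL : Integrable L μ) (s : Set Ω) (u : ℝ) :
    ∫ ω in s, L ω ∂μ - u * μ.real s ≤ ∫ ω, max (L ω - u) 0 ∂μ := by
  have hLu : Integrable (fun ω => L ω - u) μ := hL.sub (integrable_const u)
  calc ∫ ω in s, L ω ∂μ - u * μ.real s
      = ∫ ω in s, (L ω - u) ∂μ := by
        rw [integral_sub hL.integrableOn (integrable_const u).integrableOn, setIntegral_const,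
          smul_eq_mul, mul_comm]
    _ ≤ ∫ ω in s, max (L ω - u) 0 ∂μ :=
        setIntegral_mono hLu.integrableOn hLu.pos_part.integrableOn fun ω => le_max_left _ _
    _ ≤ ∫ ω, max (L ω - u) 0 ∂μ :=
        setIntegral_le_integral hLu.pos_part (ae_of_all _ fun ω => le_max_right _ _)

theorem setIntegral_div_le_cvarObjective (hL : Integrable L μ) {s : Set Ω} {β : ℝ}
    (hβ : 0 < β) (hs : μ.real s = β) (u : ℝ) :
    (∫ ω in s, L ω ∂μ) / β ≤ cvarObjective μ L β u := by
  have h := setIntegral_sub_le_integral_max_sub_zero hL s u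
  rw [hs] at h
  rw [cvarObjective, div_le_iff₀ hβ, add_mul, mul_right_comm, inv_mul_cancel₀ hβ.ne', one_mul]
  linarith

theorem cvarObjective_eq_setIntegral_div (hL : Integrable L μ) {β v : ℝ} (hβ : β ≠ 0)
    (hv : μ.real {ω | v ≤ L ω} = β) :
    cvarObjective μ L β v = (∫ ω in {ω | v ≤ L ω}, L ω ∂μ) / β := by
  rw [cvarObjective, integral_max_sub_zero_eq hL, hv]
  field_simp
  ring

theorem ciInf_cvarObjective_eq_setIntegral_div (hL : Integrable L μ) {β v : ℝ} (hβ : 0 < β)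
    (hv : μ.real {ω | v ≤ L ω} = β) :
    ⨅ u, cvarObjective μ L β u = (∫ ω in {ω | v ≤ L ω}, L ω ∂μ) / β := by
  have hleast : IsLeast (Set.range (cvarObjective μ L β)) (cvarObjective μ L β v) :=
    ⟨Set.mem_range_self v, Set.forall_mem_range.2 fun u =>
      cvarObjective_eq_setIntegral_div hL hβ.ne' hv ▸ setIntegral_div_le_cvarObjective hL hβ hv u⟩
  rw [hleast.isGLB.ciInf_eq, cvarObjective_eq_setIntegral_div hL hβ.ne' hv]

end MeasureTheory

theorem cvar_variational_representation_general
    {Ω : Type*} [MeasurableSpace Ω] (μ : Measure Ω) [IsProbabilityMeasure μ]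
    (L : Ω → ℝ) (hL : Integrable L μ)
    (β : ℝ) (hβ : β ∈ Set.Ioo (0 : ℝ) 1)
    (v : ℝ)
    (hPv : (μ {ω | v ≤ L ω}).toReal = β) :
    v + β⁻¹ * ∫ ω, max (L ω - v) 0 ∂μ
      = (∫ ω in {ω | v ≤ L ω}, L ω ∂μ) / (μ {ω | v ≤ L ω}).toReal
    ∧ (∫ ω in {ω | v ≤ L ω}, L ω ∂μ) / (μ {ω | v ≤ L ω}).toReal
      = ⨅ u : ℝ, (u + β⁻¹ * ∫ ω, max (L ω - u) 0 ∂μ) := by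
  rw [hPv]
  exact ⟨cvarObjective_eq_setIntegral_div hL hβ.1.ne' hPv,
    (ciInf_cvarObjective_eq_setIntegral_div hL hβ.1 hPv).symm⟩

/-- **Variational representation of Conditional Value at Risk.**
Let `L` be integrable, `β ∈ (0,1)`, and `v_β = inf {u : P(L ≥ u) ≤ β}`.
If `P(L ≥ v_β) = β`, then `v_β + β⁻¹ E[(L - v_β)⁺] = E[L ∣ L ≥ v_β]`, and the
Conditional Value at Risk `C_β = E[L ∣ L ≥ v_β]` equals
`inf_{u ∈ ℝ} { u + β⁻¹ E[(L - u)⁺] }`. -/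
theorem cvar_variational_representation
    {Ω : Type*} [MeasurableSpace Ω] (μ : Measure Ω) [IsProbabilityMeasure μ]
    (L : Ω → ℝ) (hLm : Measurable L) (hL : Integrable L μ)
    (β : ℝ) (hβ : β ∈ Set.Ioo (0 : ℝ) 1)
    (v : ℝ) (hv : v = sInf {u : ℝ | (μ {ω | u ≤ L ω}).toReal ≤ β})
    (hPv : (μ {ω | v ≤ L ω}).toReal = β) :
    v + β⁻¹ * ∫ ω, max (L ω - v) 0 ∂μ
      = (∫ ω in {ω | v ≤ L ω}, L ω ∂μ) / (μ {ω | v ≤ L ω}).toReal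
    ∧ (∫ ω in {ω | v ≤ L ω}, L ω ∂μ) / (μ {ω | v ≤ L ω}).toReal
      = ⨅ u : ℝ, (u + β⁻¹ * ∫ ω, max (L ω - u) 0 ∂μ) :=
  cvar_variational_representation_general μ L hL β hβ v hPv
end

section
/- Let X be an ℝ^d-valued random vector, β ∈ (0,1), and let ℓ : ℝ^d × ℝ^p → ℝ be such that θ ↦ ℓ(x, θ) is convex for every x ∈ ℝ^d and E[|ℓ(X, θ)|] < ∞ for every θ. Then the function θ ↦ inf_{u ∈ ℝ} { u + (1/β) E[(ℓ(X, θ) − u)^+] } is convex on ℝ^p. -/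
/-! The Rockafellar–Uryasev objective `(u, θ) ↦ u + β⁻¹ E[(ℓ(X, θ) - u)⁺]` is jointly convex,
being an average of convex functions of `(u, θ)`, and for `β ≤ 1` it is bounded below in `u`
by `E[ℓ(X, θ)]`. Minimising a jointly convex function over one of its arguments preserves
convexity in the other. -/

open MeasureTheory

section Convexity

variable {E F : Type*} [AddCommGroup E] [Module ℝ E] [AddCommGroup F] [Module ℝ F]

theorem ConvexOn.posPart {s : Set E} {f : E → ℝ} (hf : ConvexOn ℝ s f) :
    ConvexOn ℝ s fun x => max (f x) 0 :=
  hf.sup (convexOn_const 0 hf.1)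

theorem convexOn_integral {Ω : Type*} [MeasurableSpace Ω] {μ : Measure Ω} {s : Set E}
    {g : Ω → E → ℝ} (hs : Convex ℝ s) (hg : ∀ ω, ConvexOn ℝ s (g ω))
    (hint : ∀ x ∈ s, Integrable (fun ω => g ω x) μ) :
    ConvexOn ℝ s fun x => ∫ ω, g ω x ∂μ := by
  refine ⟨hs, fun x hx y hy a b ha hb hab => ?_⟩
  calc ∫ ω, g ω (a • x + b • y) ∂μ ≤ ∫ ω, a • g ω x + b • g ω y ∂μ :=
        integral_mono (hint _ (hs hx hy ha hb hab)) (((hint x hx).smul a).add ((hint y hy).smul b))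
          fun ω => (hg ω).2 hx hy ha hb hab
    _ = a • ∫ ω, g ω x ∂μ + b • ∫ ω, g ω y ∂μ := by
        rw [integral_add (f := fun ω => a • g ω x) (g := fun ω => b • g ω y)
          ((hint x hx).smul a) ((hint y hy).smul b), integral_smul, integral_smul]

theorem ConvexOn.ciInf_fst {f : F × E → ℝ} (hf : ConvexOn ℝ Set.univ f)
    (hbdd : ∀ x, BddBelow (Set.range fun u => f (u, x))) :
    ConvexOn ℝ Set.univ fun x => ⨅ u, f (u, x) := by
  refine ⟨convex_univ, fun x _ y _ a b ha hb hab => le_of_forall_pos_le_add fun ε hε => ?_⟩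
  obtain ⟨u, hu⟩ := exists_lt_of_ciInf_lt (lt_add_of_pos_right (⨅ u, f (u, x)) hε)
  obtain ⟨v, hv⟩ := exists_lt_of_ciInf_lt (lt_add_of_pos_right (⨅ v, f (v, y)) hε)
  calc ⨅ w, f (w, a • x + b • y) ≤ f (a • (u, x) + b • (v, y)) := ciInf_le (hbdd _) _
    _ ≤ a • f (u, x) + b • f (v, y) := hf.2 trivial trivial ha hb hab
    _ ≤ a • ((⨅ u, f (u, x)) + ε) + b • ((⨅ v, f (v, y)) + ε) := by gcongr
    _ = a • (⨅ u, f (u, x)) + b • (⨅ v, f (v, y)) + ε := by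
        simp only [smul_eq_mul]
        linear_combination ε * hab

end Convexity

theorem integral_le_add_inv_mul_integral_max_sub {Ω : Type*} [MeasurableSpace Ω]
    {μ : Measure Ω} [IsProbabilityMeasure μ] {Y : Ω → ℝ} (hY : Integrable Y μ)
    {β : ℝ} (hβ0 : 0 < β) (hβ1 : β ≤ 1) (u : ℝ) :
    ∫ ω, Y ω ∂μ ≤ u + β⁻¹ * ∫ ω, max (Y ω - u) 0 ∂μ := by
  have hexcess_nonneg : 0 ≤ ∫ ω, max (Y ω - u) 0 ∂μ :=
    integral_nonneg fun ω => le_max_right _ _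
  have hmean_le : ∫ ω, Y ω ∂μ - u ≤ ∫ ω, max (Y ω - u) 0 ∂μ := by
    calc ∫ ω, Y ω ∂μ - u = ∫ ω, Y ω - u ∂μ := by
          rw [integral_sub hY (integrable_const u), integral_const, probReal_univ, one_smul]
      _ ≤ ∫ ω, max (Y ω - u) 0 ∂μ :=
          integral_mono (hY.sub (integrable_const u)) (hY.sub (integrable_const u)).pos_part
            fun ω => le_max_left _ _
  have hβinv : 1 ≤ β⁻¹ := one_le_inv_iff₀.2 ⟨hβ0, hβ1⟩
  nlinarith

theorem cvar_convex_in_decision_general {d p : ℕ}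
    {Ω : Type*} [MeasurableSpace Ω] (μ : Measure Ω) [IsProbabilityMeasure μ]
    (X : Ω → (Fin d → ℝ))
    (β : ℝ) (hβ : β ∈ Set.Ioo (0 : ℝ) 1)
    (ℓ : (Fin d → ℝ) → (Fin p → ℝ) → ℝ)
    (hconv : ∀ x, ConvexOn ℝ Set.univ (fun θ => ℓ x θ))
    (hint : ∀ θ, Integrable (fun ω => ℓ (X ω) θ) μ) :
    ConvexOn ℝ Set.univ
      (fun θ : Fin p → ℝ =>
        ⨅ u : ℝ, (u + β⁻¹ * ∫ ω, max (ℓ (X ω) θ - u) 0 ∂μ)) := by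
  obtain ⟨hβ0, hβ1⟩ := hβ
  have hjoint : ConvexOn ℝ Set.univ fun q : ℝ × (Fin p → ℝ) =>
      q.1 + β⁻¹ * ∫ ω, max (ℓ (X ω) q.2 - q.1) 0 ∂μ := by
    refine (LinearMap.fst ℝ ℝ (Fin p → ℝ)).convexOn convex_univ |>.add
      ((convexOn_integral convex_univ (fun ω => ?_) fun q _ => ?_).smul (inv_nonneg.2 hβ0.le))
    · exact (((hconv (X ω)).comp_linearMap (LinearMap.snd ℝ ℝ _)).sub
        ((LinearMap.fst ℝ ℝ _).concaveOn convex_univ)).posPart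
    · exact ((hint q.2).sub (integrable_const q.1)).pos_part
  exact hjoint.ciInf_fst fun θ => ⟨∫ ω, ℓ (X ω) θ ∂μ, Set.forall_mem_range.2
    (integral_le_add_inv_mul_integral_max_sub (hint θ) hβ0 hβ1.le)⟩

/-- **Convexity of CVaR as a function of the decision.**
If `θ ↦ ℓ(x, θ)` is convex for every `x` and `ℓ(X, θ)` is integrable for every
`θ`, then `θ ↦ inf_{u ∈ ℝ} { u + β⁻¹ E[(ℓ(X, θ) - u)⁺] }` is convex. -/
theorem cvar_convex_in_decision {d p : ℕ}
    {Ω : Type*} [MeasurableSpace Ω] (μ : Measure Ω) [IsProbabilityMeasure μ]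
    (X : Ω → (Fin d → ℝ)) (hX : Measurable X)
    (β : ℝ) (hβ : β ∈ Set.Ioo (0 : ℝ) 1)
    (ℓ : (Fin d → ℝ) → (Fin p → ℝ) → ℝ)
    (hconv : ∀ x, ConvexOn ℝ Set.univ (fun θ => ℓ x θ))
    (hint : ∀ θ, Integrable (fun ω => ℓ (X ω) θ) μ) :
    ConvexOn ℝ Set.univ
      (fun θ : Fin p → ℝ =>
        ⨅ u : ℝ, (u + β⁻¹ * ∫ ω, max (ℓ (X ω) θ - u) 0 ∂μ)) :=
  cvar_convex_in_decision_general μ X β hβ ℓ hconv hint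
end
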